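/- Let Σ be the ranked alphabet with one binary symbol σ and one nullary symbol α, and let L_i ⊆ T_Σ be the comb tree languages defined below. Then for every ℓ ≥ 1 and every n ∈ ℕ, there exist a tree t ∈ L_{n+1} and a position w ∈ pos(t) such that the set branch_t([], w) ∩ SP^ℓ_n(t) has at least ℓ^{n+1} elements; in particular, SP^ℓ_n(t) ≠ ∅ for some t ∈ L_{n+1}. -/

import Mathlib

namespace Paper

/-- Trees over a ranked alphabet `(Γ, ar)` as a W-type. -/
abbrev Tree {Γ : Type} (ar : Γ → ℕ) : Type := WType (fun g : Γ => Fin (ar g))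

variable {Γ : Type} {ar : Γ → ℕ}

/-- Root symbol of a tree. -/
def root : Tree ar → Γ
  | ⟨g, _⟩ => g

/-- `inPos t w` holds iff `w` is a position of `t`. -/
def inPos : Tree ar → List ℕ → Prop
  | _, [] => True
  | ⟨g, f⟩, i :: w => ∃ h : i < ar g, inPos (f ⟨i, h⟩) w

/-- The set of positions of a tree. -/
def pos (t : Tree ar) : Set (List ℕ) := {w | inPos t w}

/-- Subtree of `t` at position `w` (junk value if `w` is not a position of `t`). -/
def subtree : Tree ar → List ℕ → Tree ar
  | t, [] => t
  | ⟨g, f⟩, i :: w => if h : i < ar g then subtree (f ⟨i, h⟩) w else ⟨g, f⟩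

/-- Branching positions of `t` together with two distinct successor directions. -/
def branch (t : Tree ar) : Set (List ℕ × ℕ × ℕ) :=
  {p | p.1 ∈ pos t ∧ 2 ≤ ar (root (subtree t p.1)) ∧
       p.2.1 < ar (root (subtree t p.1)) ∧ p.2.2 < ar (root (subtree t p.1)) ∧ p.2.1 ≠ p.2.2}

/-- Branching positions of `t` along the path from `w` to `w ++ w''`. -/
def branchPath (t : Tree ar) (w w'' : List ℕ) : Set (List ℕ) :=
  {v | ∃ w', w' <+: w'' ∧ v = w ++ w' ∧ ∃ i j, (w ++ w', i, j) ∈ branch t}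

/-- First projections of a set of triples. -/
def SPof (S : Set (List ℕ × ℕ × ℕ)) : Set (List ℕ) := {w | ∃ i j, (w, i, j) ∈ S}

/-- The sets `SSP^ℓ_n(t)`. -/
def SSP (ℓ : ℕ) : ℕ → Tree ar → Set (List ℕ × ℕ × ℕ)
  | 0, t => branch t
  | n+1, t =>
      {p | p ∈ branch t ∧
        (∃ w₁ ∈ SPof (SSP ℓ n (subtree t (p.1 ++ [p.2.1]))),
          ℓ ^ (n+1) ≤ (branchPath t (p.1 ++ [p.2.1]) w₁ ∩ SPof (SSP ℓ n t)).ncard) ∧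
        (∃ w₂ ∈ SPof (SSP ℓ n (subtree t (p.1 ++ [p.2.2]))),
          ℓ ^ (n+1) ≤ (branchPath t (p.1 ++ [p.2.2]) w₂ ∩ SPof (SSP ℓ n t)).ncard)}

/-- The sets `SP^ℓ_n(t)`. -/
def SP (ℓ n : ℕ) (t : Tree ar) : Set (List ℕ) := SPof (SSP ℓ n t)

/-- Height of a tree: 0 for leaves, otherwise 1 + maximum height of the subtrees. -/
def height : Tree ar → ℕ
  | ⟨_, f⟩ => Finset.univ.sup fun i => height (f i) + 1

/-- Arity function for the alphabet `Δ` extended with `k` nullary variables. -/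
def extAr {Δ : Type} (arΔ : Δ → ℕ) (k : ℕ) : Δ ⊕ Fin k → ℕ := Sum.elim arΔ fun _ => 0

/-- Trees over `Δ` with variables `x_0, …, x_{k-1}`: the set `T_Δ(X_k)`. -/
abbrev TreeX {Δ : Type} (arΔ : Δ → ℕ) (k : ℕ) : Type := Tree (extAr arΔ k)

variable {Δ : Type} {arΔ : Δ → ℕ}

/-- Substitution `s[u 0, …, u (k-1)]` of trees for the variables. -/
def subst {k : ℕ} (u : Fin k → Tree arΔ) : TreeX arΔ k → Tree arΔ
  | ⟨Sum.inl d, f⟩ => ⟨d, fun i => subst u (f i)⟩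
  | ⟨Sum.inr i, _⟩ => u i

/-- The tree map `ĥ` induced by a tree homomorphism `h`. -/
def applyHom {arΓ : Γ → ℕ} (h : ∀ g : Γ, TreeX arΔ (arΓ g)) : Tree arΓ → Tree arΔ
  | ⟨g, f⟩ => subst (fun i => applyHom h (f i)) (h g)

/-- Number of occurrences of the variable `x_i` in a tree of `T_Δ(X_k)`. -/
def varCount {k : ℕ} (i : Fin k) : TreeX arΔ k → ℕ
  | ⟨Sum.inl _, f⟩ => ∑ j, varCount i (f j)
  | ⟨Sum.inr j, _⟩ => if j = i then 1 else 0

/-- A tree homomorphism is linear if every variable occurs at most once in each image. -/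
def Linear {arΓ : Γ → ℕ} (h : ∀ g : Γ, TreeX arΔ (arΓ g)) : Prop :=
  ∀ (g : Γ) (i : Fin (arΓ g)), varCount i (h g) ≤ 1

/-- A tree homomorphism is complete if every variable occurs at least once in each image. -/
def Complete {arΓ : Γ → ℕ} (h : ∀ g : Γ, TreeX arΔ (arΓ g)) : Prop :=
  ∀ (g : Γ) (i : Fin (arΓ g)), 1 ≤ varCount i (h g)

/-- Substitution of trees with variables into a tree with variables. -/
def substC {k : ℕ} (u : Fin k → TreeX arΔ k) : TreeX arΔ k → TreeX arΔ k
  | ⟨Sum.inl d, f⟩ => ⟨Sum.inl d, fun i => substC u (f i)⟩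
  | ⟨Sum.inr i, _⟩ => u i

/-- Embedding of trees into trees with variables. -/
def embed {k : ℕ} : Tree arΔ → TreeX arΔ k
  | ⟨d, f⟩ => ⟨Sum.inl d, fun i => embed (f i)⟩

/-- The alphabet with one binary symbol `σ` and one nullary symbol `α`. -/
inductive Sym : Type
  | sig : Sym
  | alp : Sym

/-- The arity function of `Sym`. -/
def arSym : Sym → ℕ
  | .sig => 2
  | .alp => 0

/-- Trees over the alphabet `Σ = {σ, α}`. -/
abbrev TSig : Type := Tree arSym

/-- The tree `α`. -/
def alphaT : TSig := ⟨Sym.alp, Fin.elim0⟩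

/-- The variable `x` as a context. -/
def varX : TreeX arSym 1 := ⟨Sum.inr 0, Fin.elim0⟩

/-- `σ(c, c')` as a context. -/
def sigX (c c' : TreeX arSym 1) : TreeX arSym 1 := ⟨Sum.inl Sym.sig, ![c, c']⟩

/-- The smallest set of contexts containing `σ(x, t)` for every `t ∈ Lprev` and
closed under context composition `c[c']`. -/
inductive CtxSet (Lprev : Set TSig) : TreeX arSym 1 → Prop
  | base {t : TSig} : t ∈ Lprev → CtxSet Lprev (sigX varX (embed t))
  | comp {c c' : TreeX arSym 1} : CtxSet Lprev c → CtxSet Lprev c' →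
      CtxSet Lprev (substC (fun _ => c') c)

/-- The comb languages: `L_0 = {α}` and `L_{i+1} = { c[α] | c ∈ C_{i+1} }`
where `C_{i+1}` is generated from `L_i`. -/
def Lang : ℕ → Set TSig
  | 0 => {alphaT}
  | i+1 => {t | ∃ c, CtxSet (Lang i) c ∧ subst (fun _ => alphaT) c = t}

/-! The trees witnessing the bound are combs `σ(σ(…σ(α, s)…, s), s)` whose teeth `s` are the
witnesses one level down. Membership in `SP^ℓ_n` is local (it depends only on the subtree below
a position), so every spine node with a comb below its left child sees, in both directions, a
copy of the tooth's path count. With `ℓ^(n+2) + 1` such spine nodes, the path down the spine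
meets more than `ℓ^(n+2)` elements of `SP^ℓ_{n+1}`. -/

lemma inPos_nil (t : Tree ar) : inPos t [] := by
  obtain ⟨g, f⟩ := t; trivial

lemma subtree_nil (t : Tree ar) : subtree t [] = t := by
  obtain ⟨g, f⟩ := t; rfl

lemma inPos_of_append {t : Tree ar} {v u : List ℕ} (h : inPos t (v ++ u)) : inPos t v := by
  induction v generalizing t with
  | nil => exact inPos_nil t
  | cons i v ih =>
    obtain ⟨g, f⟩ := t
    obtain ⟨hi, h⟩ := h
    exact ⟨hi, ih h⟩

lemma inPos_append {t : Tree ar} {v : List ℕ} (hv : inPos t v) (u : List ℕ) :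
    inPos t (v ++ u) ↔ inPos (subtree t v) u := by
  induction v generalizing t with
  | nil => rw [List.nil_append, subtree_nil]
  | cons i v ih =>
    obtain ⟨g, f⟩ := t
    obtain ⟨hi, hv⟩ := hv
    simp only [List.cons_append, subtree, inPos, hi, exists_true_left]
    exact ih hv

lemma subtree_append {t : Tree ar} {v : List ℕ} (hv : inPos t v) (u : List ℕ) :
    subtree t (v ++ u) = subtree (subtree t v) u := by
  induction v generalizing t with
  | nil => rw [List.nil_append, subtree_nil]
  | cons i v ih =>
    obtain ⟨g, f⟩ := t
    obtain ⟨hi, hv⟩ := hv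
    simp only [List.cons_append, subtree, dif_pos hi]
    exact ih hv

section Locality

variable {t : Tree ar} {v : List ℕ}

lemma branch_append (hv : inPos t v) (u : List ℕ) (i j : ℕ) :
    (v ++ u, i, j) ∈ branch t ↔ (u, i, j) ∈ branch (subtree t v) := by
  simp only [branch, Set.mem_ofPred_eq, pos, subtree_append hv u, inPos_append hv u]

lemma branchPath_append (hv : inPos t v) (x w : List ℕ) :
    branchPath t (v ++ x) w = (v ++ ·) '' branchPath (subtree t v) x w := by
  ext y
  simp only [branchPath, Set.mem_ofPred_eq, Set.mem_image, List.append_assoc,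
    branch_append hv]
  constructor
  · rintro ⟨w', hw', rfl, hb⟩
    exact ⟨x ++ w', ⟨w', hw', rfl, hb⟩, rfl⟩
  · rintro ⟨_, ⟨w', hw', rfl, hb⟩, rfl⟩
    exact ⟨w', hw', rfl, hb⟩

lemma ncard_branchPath_inter_append (hv : inPos t v) {S S' : Set (List ℕ)}
    (hS : (v ++ ·) ⁻¹' S = S') (x w : List ℕ) :
    (branchPath t (v ++ x) w ∩ S).ncard = (branchPath (subtree t v) x w ∩ S').ncard := by
  rw [branchPath_append hv, ← Set.image_inter_preimage, hS,
    Set.ncard_image_of_injective _ (List.append_right_injective v)]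

lemma SSP_append (ℓ n : ℕ) (hv : inPos t v) (u : List ℕ) (i j : ℕ) :
    (v ++ u, i, j) ∈ SSP ℓ n t ↔ (u, i, j) ∈ SSP ℓ n (subtree t v) := by
  induction n generalizing u i j with
  | zero => exact branch_append hv u i j
  | succ n ih =>
    have hSP : (v ++ ·) ⁻¹' SPof (SSP ℓ n t) = SPof (SSP ℓ n (subtree t v)) := by
      ext u
      simp only [SPof, Set.mem_preimage, Set.mem_ofPred_eq, ih]
    simp only [SSP, Set.mem_ofPred_eq, branch_append hv, List.append_assoc,
      subtree_append hv, ncard_branchPath_inter_append hv hSP]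

lemma preimage_append_SP (ℓ n : ℕ) (hv : inPos t v) :
    (v ++ ·) ⁻¹' SP ℓ n t = SP ℓ n (subtree t v) := by
  ext u
  simp only [SP, SPof, Set.mem_preimage, Set.mem_ofPred_eq, SSP_append ℓ n hv]

end Locality

section Counting

variable {t : Tree ar} {ℓ n : ℕ}

lemma SSP_subset_branch : SSP ℓ n t ⊆ branch t := by
  cases n with
  | zero => exact subset_rfl
  | succ n => exact fun _ hp => hp.1

lemma SP_subset_pos : SP ℓ n t ⊆ pos t := by
  rintro w ⟨i, j, h⟩
  exact (SSP_subset_branch h).1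

lemma branchPath_finite (x w : List ℕ) : (branchPath t x w).Finite := by
  refine ((List.finite_toSet w.inits).image (x ++ ·)).subset ?_
  rintro _ ⟨w', hw', rfl, _⟩
  exact ⟨w', by simpa using hw', rfl⟩

lemma branchPath_append_subset (v x w : List ℕ) :
    branchPath t (v ++ x) w ⊆ branchPath t v (x ++ w) := by
  rintro _ ⟨w', hw', rfl, hb⟩
  exact ⟨x ++ w', (List.prefix_append_right_inj x).mpr hw', List.append_assoc .., by
    rwa [← List.append_assoc]⟩

lemma exists_mem_SP_le_ncard_of_subtree_eq {q x : List ℕ} (hqx : inPos t (q ++ x))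
    {s : Tree ar} (hs : subtree t (q ++ x) = s) {ws : List ℕ} (hws : ws ∈ SP ℓ n s) {c : ℕ}
    (hc : c ≤ (branchPath s [] ws ∩ SP ℓ n s).ncard) :
    ∃ w ∈ SP ℓ n (subtree t q), c ≤ (branchPath t q w ∩ SP ℓ n t).ncard := by
  have hq : inPos t q := inPos_of_append hqx
  refine ⟨x ++ ws, ?_, ?_⟩
  · rw [← preimage_append_SP ℓ n hq, Set.mem_preimage, ← List.append_assoc,
      ← Set.mem_preimage (f := ((q ++ x) ++ ·)), preimage_append_SP ℓ n hqx, hs]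
    exact hws
  · calc c ≤ (branchPath s [] ws ∩ SP ℓ n s).ncard := hc
      _ = (branchPath t ((q ++ x) ++ []) ws ∩ SP ℓ n t).ncard := by
        rw [ncard_branchPath_inter_append hqx (preimage_append_SP ℓ n hqx), hs]
      _ ≤ (branchPath t q (x ++ ws) ∩ SP ℓ n t).ncard := by
        rw [List.append_nil]
        exact Set.ncard_le_ncard (Set.inter_subset_inter_left _ (branchPath_append_subset ..))
          ((branchPath_finite ..).inter_of_left _)

lemma replicate_prefix_replicate {α : Type*} (a : α) {k N : ℕ} (h : k ≤ N) :
    List.replicate k a <+: List.replicate N a :=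
  ⟨List.replicate (N - k) a, by rw [← List.replicate_add, Nat.add_sub_cancel' h]⟩

lemma succ_le_ncard_branchPath_replicate {N : ℕ}
    (h : ∀ k ≤ N, List.replicate k 0 ∈ SP ℓ n t) :
    N + 1 ≤ (branchPath t [] (List.replicate N 0) ∩ SP ℓ n t).ncard := by
  have hsub : (List.replicate · 0) '' Set.Iic N ⊆
      branchPath t [] (List.replicate N 0) ∩ SP ℓ n t := by
    rintro _ ⟨k, hk, rfl⟩
    obtain ⟨i, j, hb⟩ := h k hk
    exact ⟨⟨_, replicate_prefix_replicate 0 hk, rfl, i, j, SSP_subset_branch hb⟩, h k hk⟩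
  have hinj : Function.Injective (List.replicate · (0 : ℕ)) := fun a b hab => by
    simpa using congrArg List.length hab
  calc N + 1 = ((List.replicate · 0) '' Set.Iic N).ncard := by
        rw [Set.ncard_image_of_injective _ hinj, ← Finset.coe_Iic, Set.ncard_coe_finset,
          Nat.card_Iic]
    _ ≤ _ := Set.ncard_le_ncard hsub ((branchPath_finite ..).inter_of_left _)

end Counting

section Comb

lemma subst_substC {k : ℕ} (u : Fin k → Tree arΔ) (v : Fin k → TreeX arΔ k) :
    ∀ c, subst u (substC v c) = subst (fun i => subst u (v i)) c
  | ⟨Sum.inl d, f⟩ => congrArg (WType.mk d) (funext fun i => subst_substC u v (f i))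
  | ⟨Sum.inr _, _⟩ => rfl

lemma subst_embed {k : ℕ} (u : Fin k → Tree arΔ) : ∀ t, subst u (embed (k := k) t) = t
  | ⟨d, f⟩ => congrArg (WType.mk d) (funext fun i => subst_embed u (f i))

lemma subst_sigX_varX_embed (u : Fin 1 → TSig) (s : TSig) :
    subst u (sigX varX (embed s)) = ⟨Sym.sig, ![u 0, s]⟩ := by
  refine congrArg (WType.mk Sym.sig) (funext fun i => ?_)
  fin_cases i
  · rfl
  · exact subst_embed u s

def comb (s b : TSig) : ℕ → TSig
  | 0 => b
  | m + 1 => ⟨Sym.sig, ![comb s b m, s]⟩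

lemma exists_CtxSet_subst_eq_comb {L : Set TSig} {s : TSig} (hs : s ∈ L) (m : ℕ) :
    ∃ c, CtxSet L c ∧ ∀ u : Fin 1 → TSig, subst u c = comb s (u 0) (m + 1) := by
  induction m with
  | zero => exact ⟨_, .base hs, fun u => subst_sigX_varX_embed u s⟩
  | succ m ih =>
    obtain ⟨c, hc, hsubst⟩ := ih
    refine ⟨_, .comp (.base hs) hc, fun u => ?_⟩
    rw [subst_substC, subst_sigX_varX_embed, hsubst]
    rfl

lemma comb_mem_Lang {n : ℕ} {s : TSig} (hs : s ∈ Lang n) (m : ℕ) :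
    comb s alphaT (m + 1) ∈ Lang (n + 1) :=
  let ⟨c, hc, hsubst⟩ := exists_CtxSet_subst_eq_comb hs m
  ⟨c, hc, hsubst _⟩

variable {s b : TSig}

lemma inPos_comb_replicate : ∀ {k m : ℕ}, k ≤ m → inPos (comb s b m) (List.replicate k 0)
  | 0, _, _ => inPos_nil _
  | k + 1, m + 1, h => ⟨by decide, by exact inPos_comb_replicate (Nat.le_of_succ_le_succ h)⟩

lemma subtree_comb_replicate : ∀ {k m : ℕ}, k ≤ m →
    subtree (comb s b m) (List.replicate k 0) = comb s b (m - k)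
  | 0, _, _ => subtree_nil _
  | k + 1, m + 1, h => by
    rw [List.replicate_succ, Nat.add_sub_add_right,
      ← subtree_comb_replicate (Nat.le_of_succ_le_succ h)]
    rfl

lemma inPos_comb_replicate_one {k m : ℕ} (h : k < m) :
    inPos (comb s b m) (List.replicate k 0 ++ [1]) := by
  obtain ⟨d, rfl⟩ : ∃ d, m = k + (d + 1) := ⟨m - k - 1, by omega⟩
  rw [inPos_append (inPos_comb_replicate h.le), subtree_comb_replicate h.le,
    Nat.add_sub_cancel_left]
  exact ⟨by decide, inPos_nil _⟩

lemma subtree_comb_replicate_one {k m : ℕ} (h : k < m) :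
    subtree (comb s b m) (List.replicate k 0 ++ [1]) = s := by
  obtain ⟨d, rfl⟩ : ∃ d, m = k + (d + 1) := ⟨m - k - 1, by omega⟩
  rw [subtree_append (inPos_comb_replicate h.le), subtree_comb_replicate h.le,
    Nat.add_sub_cancel_left]
  simp [comb, subtree, arSym]

lemma replicate_mem_branch_comb {k m : ℕ} (h : k < m) :
    (List.replicate k 0, 0, 1) ∈ branch (comb s b m) := by
  obtain ⟨d, rfl⟩ : ∃ d, m = k + (d + 1) := ⟨m - k - 1, by omega⟩
  refine ⟨inPos_comb_replicate h.le, ?_⟩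
  simp only [subtree_comb_replicate h.le, Nat.add_sub_cancel_left]
  simp [comb, root, arSym]

end Comb

lemma replicate_mem_SSP_succ_comb {ℓ n : ℕ} {s : TSig} {ws : List ℕ} (hws : ws ∈ SP ℓ n s)
    (hcount : ℓ ^ (n + 1) ≤ (branchPath s [] ws ∩ SP ℓ n s).ncard) (b : TSig) {k m : ℕ}
    (h : k + 1 < m) : (List.replicate k 0, 0, 1) ∈ SSP ℓ (n + 1) (comb s b m) := by
  have hleft : List.replicate k 0 ++ [0] ++ [1] = List.replicate (k + 1) 0 ++ [1] := by
    rw [← List.replicate_succ']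
  refine ⟨replicate_mem_branch_comb (by omega), ?_, ?_⟩
  · refine exists_mem_SP_le_ncard_of_subtree_eq (x := [1]) ?_ ?_ hws hcount <;> rw [hleft]
    exacts [inPos_comb_replicate_one h, subtree_comb_replicate_one h]
  · refine exists_mem_SP_le_ncard_of_subtree_eq (x := []) ?_ ?_ hws hcount <;>
      rw [List.append_nil]
    exacts [inPos_comb_replicate_one (by omega), subtree_comb_replicate_one (by omega)]

lemma exists_mem_Lang_le_ncard_branchPath_inter_SP (ℓ n : ℕ) :
    ∃ t ∈ Lang (n + 1), ∃ w ∈ SP ℓ n t,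
      ℓ ^ (n + 1) ≤ (branchPath t [] w ∩ SP ℓ n t).ncard := by
  induction n with
  | zero =>
    have hSP : ∀ k ≤ ℓ, List.replicate k 0 ∈ SP ℓ 0 (comb alphaT alphaT (ℓ + 1)) :=
      fun k hk => ⟨0, 1, replicate_mem_branch_comb (by omega)⟩
    refine ⟨_, comb_mem_Lang rfl ℓ, _, hSP ℓ le_rfl, ?_⟩
    simpa using (succ_le_ncard_branchPath_replicate hSP).trans' (Nat.le_succ ℓ)
  | succ n ih =>
    obtain ⟨s, hs, ws, hws, hcount⟩ := ih
    have hSP : ∀ k ≤ ℓ ^ (n + 2),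
        List.replicate k 0 ∈ SP ℓ (n + 1) (comb s alphaT (ℓ ^ (n + 2) + 2)) :=
      fun k hk => ⟨0, 1, replicate_mem_SSP_succ_comb hws hcount alphaT (by omega)⟩
    exact ⟨_, comb_mem_Lang hs _, _, hSP _ le_rfl,
      (succ_le_ncard_branchPath_replicate hSP).trans' (Nat.le_succ _)⟩

theorem comb_SP_lower_bound_general (ℓ : ℕ) (n : ℕ) :
    ∃ t ∈ Lang (n + 1),
      (∃ w ∈ pos t, ℓ ^ (n + 1) ≤ (branchPath t [] w ∩ SP ℓ n t).ncard) ∧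
      (SP ℓ n t).Nonempty := by
  obtain ⟨t, ht, w, hw, hcount⟩ := exists_mem_Lang_le_ncard_branchPath_inter_SP ℓ n
  exact ⟨t, ht, ⟨w, SP_subset_pos hw, hcount⟩, w, hw⟩

/-- for every `ℓ ≥ 1` and `n`, there exist `t ∈ L_{n+1}` and a
position `w` of `t` such that `branch_t([], w) ∩ SP^ℓ_n(t)` has at least `ℓ^{n+1}`
elements; in particular `SP^ℓ_n(t) ≠ ∅`. -/
theorem comb_SP_lower_bound (ℓ : ℕ) (hℓ : 1 ≤ ℓ) (n : ℕ) :
    ∃ t ∈ Lang (n + 1),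
      (∃ w ∈ pos t, ℓ ^ (n + 1) ≤ (branchPath t [] w ∩ SP ℓ n t).ncard) ∧
      (SP ℓ n t).Nonempty :=
  comb_SP_lower_bound_general ℓ n

end Paper
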